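/- Let 0 < α ≤ 2 and let d ≥ 1. The characteristic functional of the periodic SαS white noise, namely the map φ ↦ exp(−∫_{𝕋^d} |φ(x)|^α dx) defined on real-valued measurable functions φ on 𝕋^d with ∫_{𝕋^d} |φ|^α < ∞, is positive semi-definite: for every n ≥ 1, every φ_1, …, φ_n with ∫_{𝕋^d} |φ_i|^α < ∞, and every c_1, …, c_n ∈ ℂ, the sum Σ_{i=1}^n Σ_{j=1}^n c_i · conj(c_j) · exp(−∫_{𝕋^d} |φ_i(x) − φ_j(x)|^α dx) is a nonnegative real number. -/

import Mathlib

/-!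
For `0 < α < 2` the Lévy–Khinchine formula
`|u| ^ α = C⁻¹ ∫₀^∞ (1 - cos (u s)) s ^ (-1 - α) ds` writes `|t i - t j| ^ α` as a nonnegative
combination of the kernels `1 - cos ((t i - t j) s)`, each a constant minus a positive semidefinite
kernel; for `α = 2` one expands the square. Hence `|t i - t j| ^ α` is conditionally negative
definite, and so is its integral `N i j = ∫ |φ i - φ j| ^ α` over the torus. Schoenberg's theorem
turns a conditionally negative definite `N` into a positive semidefinite `exp (-N)`: relative to a
base point `i₀`, `N i i₀ + N i₀ j - N i j - N i₀ i₀` is positive semidefinite, so is its entrywise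
exponential by the Schur product theorem, and `exp (-N)` is the entrywise product of that matrix
with a rank-one positive semidefinite one.
-/

open MeasureTheory

/-- The `d`-dimensional torus realized as the cube `[−1/2, 1/2)^d ⊂ ℝ^d`. -/
def torusCube (d : ℕ) : Set (Fin d → ℝ) :=
  Set.univ.pi fun _ => Set.Ico (-(1 / 2) : ℝ) (1 / 2)

open Set Matrix
open scoped ComplexOrder

section LevyKhinchine

variable {α : ℝ}

theorem integrableOn_one_sub_cos_mul_rpow (hα0 : 0 < α) (hα2 : α < 2) (u : ℝ) :
    IntegrableOn (fun s => (1 - Real.cos (u * s)) * s ^ (-1 - α)) (Ioi 0) := by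
  have hmeas : AEStronglyMeasurable (fun s : ℝ => (1 - Real.cos (u * s)) * s ^ (-1 - α)) := by
    fun_prop
  have hnonneg : ∀ s ∈ Ioi (0 : ℝ), 0 ≤ (1 - Real.cos (u * s)) * s ^ (-1 - α) := fun s hs =>
    mul_nonneg (by linarith [Real.cos_le_one (u * s)]) (Real.rpow_nonneg (le_of_lt hs) _)
  rw [← Ioc_union_Ioi_eq_Ioi zero_le_one]
  refine IntegrableOn.union ?_ ?_
  · have hg : IntegrableOn (fun s : ℝ => u ^ 2 / 2 * s ^ (1 - α)) (Ioc 0 1) :=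
      ((intervalIntegral.intervalIntegrable_rpow' (by linarith)).1).const_mul _
    refine hg.mono' hmeas.restrict (ae_restrict_of_forall_mem measurableSet_Ioc fun s hs => ?_)
    rw [Real.norm_of_nonneg (hnonneg s hs.1)]
    have hpow : s ^ (1 - α) = s ^ (2 : ℝ) * s ^ (-1 - α) := by
      rw [← Real.rpow_add hs.1]
      ring_nf
    calc (1 - Real.cos (u * s)) * s ^ (-1 - α)
        ≤ (u * s) ^ 2 / 2 * s ^ (-1 - α) := by
          gcongr
          · exact Real.rpow_nonneg hs.1.le _
          · linarith [Real.one_sub_sq_div_two_le_cos (x := u * s)]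
      _ = u ^ 2 / 2 * s ^ (1 - α) := by rw [hpow, Real.rpow_two]; ring
  · have hg : IntegrableOn (fun s : ℝ => 2 * s ^ (-1 - α)) (Ioi 1) :=
      (integrableOn_Ioi_rpow_of_lt (by linarith) one_pos).const_mul 2
    refine hg.mono' hmeas.restrict (ae_restrict_of_forall_mem measurableSet_Ioi fun s hs => ?_)
    have hs0 : (0 : ℝ) < s := one_pos.trans hs
    rw [Real.norm_of_nonneg (hnonneg s hs0)]
    gcongr
    linarith [Real.neg_one_le_cos (u * s)]

theorem integral_one_sub_cos_mul_rpow (hα0 : 0 < α) (u : ℝ) :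
    ∫ s in Ioi 0, (1 - Real.cos (u * s)) * s ^ (-1 - α) =
      |u| ^ α * ∫ s in Ioi 0, (1 - Real.cos s) * s ^ (-1 - α) := by
  rcases eq_or_ne u 0 with rfl | hu
  · simp [Real.zero_rpow hα0.ne']
  have hu' : 0 < |u| := abs_pos.mpr hu
  have hscale : ∀ s ∈ Ioi (0 : ℝ), (1 - Real.cos (u * s)) * s ^ (-1 - α) =
      |u| ^ (1 + α) * ((1 - Real.cos (|u| * s)) * (|u| * s) ^ (-1 - α)) := by
    intro s hs
    rw [← Real.cos_abs (u * s), abs_mul, abs_of_pos (show (0 : ℝ) < s from hs),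
      Real.mul_rpow hu'.le (le_of_lt hs)]
    rw [show |u| ^ (1 + α) * ((1 - Real.cos (|u| * s)) * (|u| ^ (-1 - α) * s ^ (-1 - α))) =
      (|u| ^ (1 + α) * |u| ^ (-1 - α)) * ((1 - Real.cos (|u| * s)) * s ^ (-1 - α)) by ring,
      ← Real.rpow_add hu']
    norm_num
  rw [setIntegral_congr_fun measurableSet_Ioi hscale, integral_const_mul,
    integral_comp_mul_left_Ioi (fun t => (1 - Real.cos t) * t ^ (-1 - α)) 0 hu', mul_zero,
    smul_eq_mul, ← mul_assoc, ← Real.rpow_neg_one, ← Real.rpow_add hu']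
  ring_nf

theorem integral_one_sub_cos_mul_rpow_pos (hα0 : 0 < α) (hα2 : α < 2) :
    0 < ∫ s in Ioi 0, (1 - Real.cos s) * s ^ (-1 - α) := by
  have hint := integrableOn_one_sub_cos_mul_rpow hα0 hα2 1
  simp only [one_mul] at hint
  rw [setIntegral_pos_iff_support_of_nonneg_ae _ hint]
  · have hpos : ∀ s ∈ Ioo 0 (2 * Real.pi), (1 - Real.cos s) * s ^ (-1 - α) ≠ 0 := fun s hs =>
      mul_ne_zero (sub_ne_zero.mpr fun h => hs.1.ne' <|
          (Real.cos_eq_one_iff_of_lt_of_lt (by linarith [hs.1, Real.pi_pos]) hs.2).mp h.symm)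
        (Real.rpow_pos_of_pos hs.1 _).ne'
    calc 0 < volume (Ioo 0 (2 * Real.pi)) := by simp [Real.pi_pos]
      _ ≤ _ := measure_mono fun s hs => mem_inter (Function.mem_support.mpr (hpos s hs)) hs.1
  · exact ae_restrict_of_forall_mem measurableSet_Ioi fun s hs =>
      mul_nonneg (by linarith [Real.cos_le_one s]) (Real.rpow_nonneg (le_of_lt hs) _)

end LevyKhinchine

theorem integrable_abs_sub_rpow {X : Type*} [MeasurableSpace X] {μ : Measure X} {f g : X → ℝ}
    {α : ℝ} (hα : 0 < α) (hf : AEStronglyMeasurable f μ) (hg : AEStronglyMeasurable g μ)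
    (hfi : Integrable (fun x => |f x| ^ α) μ) (hgi : Integrable (fun x => |g x| ^ α) μ) :
    Integrable (fun x => |f x - g x| ^ α) μ := by
  have memLp_iff : ∀ {h : X → ℝ}, AEStronglyMeasurable h μ →
      (Integrable (fun x => |h x| ^ α) μ ↔ MemLp h (ENNReal.ofReal α) μ) := fun hh => by
    have := integrable_norm_rpow_iff hh (by simpa using hα) ENNReal.ofReal_ne_top
    simpa only [ENNReal.toReal_ofReal hα.le, Real.norm_eq_abs] using this
  exact (memLp_iff (hf.sub hg)).mpr (((memLp_iff hf).mp hfi).sub ((memLp_iff hg).mp hgi))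

namespace Matrix

variable {ι : Type*} [Fintype ι]

/-- `≤ 0` is taken in `ComplexOrder`, so it also asserts that the form is real. -/
def CondNegSemidef (N : Matrix ι ι ℂ) : Prop :=
  N.IsHermitian ∧ ∀ x : ι → ℂ, ∑ i, x i = 0 → star x ⬝ᵥ (N *ᵥ x) ≤ 0

namespace CondNegSemidef

variable {M N : Matrix ι ι ℂ}

theorem add (hM : M.CondNegSemidef) (hN : N.CondNegSemidef) : (M + N).CondNegSemidef :=
  ⟨hM.1.add hN.1, fun x hx => by
    simpa only [add_mulVec, dotProduct_add] using add_nonpos (hM.2 x hx) (hN.2 x hx)⟩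

theorem smul (hN : N.CondNegSemidef) {c : ℂ} (hc : 0 ≤ c) : (c • N).CondNegSemidef :=
  ⟨IsSelfAdjoint.smul (.of_nonneg hc) hN.1, fun x hx => by
    simpa only [smul_mulVec, dotProduct_smul, smul_eq_mul] using
      mul_nonpos_of_nonneg_of_nonpos hc (hN.2 x hx)⟩

theorem posSemidef_neg_conjTranspose_mul_mul (hN : N.CondNegSemidef) {B : Matrix ι ι ℂ}
    (hB : ∀ j, ∑ i, B i j = 0) : (-(Bᴴ * N * B)).PosSemidef := by
  refine .of_dotProduct_mulVec_nonneg (isHermitian_conjTranspose_mul_mul B hN.1).neg fun x => ?_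
  have hBx : ∑ i, (B *ᵥ x) i = 0 := by
    simp only [mulVec, dotProduct, Finset.sum_comm (γ := ι), ← Finset.sum_mul, hB, zero_mul,
      Finset.sum_const_zero]
  simpa only [neg_mulVec, dotProduct_neg, neg_nonneg, star_mulVec, dotProduct_mulVec,
    vecMul_vecMul, ← mulVec_mulVec] using hN.2 _ hBx

end CondNegSemidef

theorem PosSemidef.condNegSemidef_neg {A : Matrix ι ι ℂ} (hA : A.PosSemidef) :
    (-A).CondNegSemidef :=
  ⟨hA.1.neg, fun x _ => by simpa [neg_mulVec] using hA.dotProduct_mulVec_nonneg x⟩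

theorem condNegSemidef_of_add (a : ι → ℝ) :
    (of fun i j => (a i + a j : ℂ)).CondNegSemidef := by
  refine ⟨?_, fun x hx => ?_⟩
  · ext i j
    simp [add_comm]
  · simp [dotProduct, mulVec, add_mul, Finset.sum_add_distrib, ← Finset.mul_sum, ← Finset.sum_mul,
      ← map_sum, hx]

section Integral

variable {X : Type*} [MeasurableSpace X] {μ : Measure X} {f : ι → ι → X → ℂ}

theorem star_dotProduct_integral_mulVec (hf : ∀ i j, Integrable (f i j) μ) (x : ι → ℂ) :
    star x ⬝ᵥ (of fun i j => ∫ s, f i j s ∂μ) *ᵥ x =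
      ∫ s, star x ⬝ᵥ (of fun i j => f i j s) *ᵥ x ∂μ := by
  simp only [dotProduct, mulVec, of_apply]
  rw [integral_finsetSum _ fun i _ => (integrable_finsetSum _ fun j _ =>
    (hf i j).mul_const _).const_mul _]
  refine Finset.sum_congr rfl fun i _ => ?_
  rw [integral_const_mul, integral_finsetSum _ fun j _ => (hf i j).mul_const _]
  simp only [integral_mul_const]

theorem CondNegSemidef.integral (hf : ∀ i j, Integrable (f i j) μ)
    (h : ∀ᵐ s ∂μ, (of fun i j => f i j s).CondNegSemidef) :
    (of fun i j => ∫ s, f i j s ∂μ).CondNegSemidef := by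
  refine ⟨?_, fun x hx => ?_⟩
  · ext i j
    simp only [conjTranspose_apply, of_apply, Complex.star_def, ← integral_conj]
    refine integral_congr_ae ?_
    filter_upwards [h] with s hs
    exact hs.1.apply i j
  · rw [star_dotProduct_integral_mulVec hf]
    exact integral_nonpos_of_ae (h.mono fun s hs => hs.2 x hx)

end Integral

theorem PosSemidef.map_pow {A : Matrix ι ι ℂ} (hA : A.PosSemidef) :
    ∀ m : ℕ, (A.map (· ^ m)).PosSemidef
  | 0 => by simpa [vecMulVec, Matrix.map] using posSemidef_vecMulVec_self_star (1 : ι → ℂ)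
  | m + 1 => by
    have h : A.map (· ^ (m + 1)) = A.map (· ^ m) ⊙ A := by ext; simp [pow_succ]
    rw [h]
    exact (hA.map_pow m).hadamard hA

theorem PosSemidef.map_exp {A : Matrix ι ι ℂ} (hA : A.PosSemidef) :
    (A.map Complex.exp).PosSemidef := by
  refine .of_dotProduct_mulVec_nonneg ?_ fun x => ?_
  · ext i j
    simp only [conjTranspose_apply, map_apply, Complex.star_def, ← Complex.exp_conj]
    rw [← Complex.star_def, hA.1.apply]
  have hsum : HasSum (fun m : ℕ => (m.factorial : ℂ)⁻¹ • A.map (· ^ m)) (A.map Complex.exp) := by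
    refine Pi.hasSum.mpr fun i => Pi.hasSum.mpr fun j => ?_
    simpa [Complex.exp_eq_exp_ℂ] using NormedSpace.exp_series_hasSum_exp' (𝕂 := ℂ) (A i j)
  let quadForm : Matrix ι ι ℂ →+ ℂ :=
    AddMonoidHom.mk' (fun M => star x ⬝ᵥ M *ᵥ x) fun M M' => by
      simp only [add_mulVec, dotProduct_add]
  have hcont : Continuous quadForm := by
    show Continuous fun M : Matrix ι ι ℂ => star x ⬝ᵥ M *ᵥ x
    fun_prop
  exact (hsum.map quadForm hcont).nonneg fun m =>
    ((hA.map_pow m).smul (by positivity)).dotProduct_mulVec_nonneg x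

theorem CondNegSemidef.posSemidef_map_exp_neg {N : Matrix ι ι ℂ} (hN : N.CondNegSemidef) :
    (N.map fun z => Complex.exp (-z)).PosSemidef := by
  classical
  rcases isEmpty_or_nonempty ι with hι | ⟨⟨i₀⟩⟩
  · rw [Subsingleton.elim (N.map _) 0]
    exact .zero
  -- `B x = x - (∑ i, x i) • Pi.single i₀ 1` maps every vector to a vector with sum zero.
  let B : Matrix ι ι ℂ := 1 - vecMulVec (Pi.single i₀ 1) 1
  have hB : ∀ j, ∑ i, B i j = 0 := by
    intro j
    simp [B, one_apply, Finset.sum_sub_distrib, Pi.single_apply]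
  have hBNB : ∀ i j, (Bᴴ * N * B) i j = N i j - N i i₀ - N i₀ j + N i₀ i₀ := by
    intro i j
    simp [B, Matrix.mul_apply, sub_mul, mul_sub, Finset.sum_sub_distrib, one_apply,
      Pi.single_apply]
    ring
  let d : ι → ℂ := fun i => Complex.exp (N i₀ i₀ / 2 - N i i₀)
  have h : N.map (fun z => Complex.exp (-z)) =
      (-(Bᴴ * N * B)).map Complex.exp ⊙ vecMulVec d (star d) := by
    ext i j
    have h1 := hN.1.apply i₀ i₀
    have h2 := hN.1.apply i₀ j
    simp only [Complex.star_def] at h1 h2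
    simp only [map_apply, hadamard_apply, neg_apply, hBNB, vecMulVec_apply, Pi.star_apply, d,
      Complex.star_def, ← Complex.exp_conj, map_sub, map_div₀, map_ofNat, h1, h2,
      ← Complex.exp_add]
    congr 1
    ring
  rw [h]
  exact (hN.posSemidef_neg_conjTranspose_mul_mul hB).map_exp.hadamard
    (posSemidef_vecMulVec_self_star d)

theorem PosSemidef.sum_mul_conj_mul_nonneg {A : Matrix ι ι ℂ} (hA : A.PosSemidef) (c : ι → ℂ) :
    0 ≤ ∑ i, ∑ j, c i * starRingEnd ℂ (c j) * A i j := by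
  convert hA.dotProduct_mulVec_nonneg (star c) using 1
  simp only [dotProduct, mulVec, Finset.mul_sum, Pi.star_apply, Complex.star_def,
    Complex.conj_conj]
  exact Finset.sum_congr rfl fun i _ => Finset.sum_congr rfl fun j _ => by ring

theorem condNegSemidef_sub_sq (t : ι → ℝ) :
    (of fun i j => (((t i - t j) ^ 2 : ℝ) : ℂ)).CondNegSemidef := by
  have h : (of fun i j => (((t i - t j) ^ 2 : ℝ) : ℂ)) =
      of (fun i j => ((t i ^ 2 : ℝ) : ℂ) + (t j ^ 2 : ℝ)) +
        -((2 : ℂ) • vecMulVec (fun i => (t i : ℂ)) (star fun i => (t i : ℂ))) := by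
    ext i j
    simp [vecMulVec_apply]
    ring
  rw [h]
  exact (condNegSemidef_of_add _).add
    ((posSemidef_vecMulVec_self_star _).smul (by norm_num)).condNegSemidef_neg

theorem condNegSemidef_one_sub_cos (t : ι → ℝ) (s : ℝ) :
    (of fun i j => ((1 - Real.cos ((t i - t j) * s) : ℝ) : ℂ)).CondNegSemidef := by
  let c : ι → ℂ := fun i => Real.cos (t i * s)
  let σ : ι → ℂ := fun i => Real.sin (t i * s)
  have h : (of fun i j => ((1 - Real.cos ((t i - t j) * s) : ℝ) : ℂ)) =
      of (fun i j => ((1 / 2 : ℝ) : ℂ) + ((1 / 2 : ℝ) : ℂ)) +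
        -(vecMulVec c (star c) + vecMulVec σ (star σ)) := by
    ext i j
    simp only [of_apply, add_apply, neg_apply, vecMulVec_apply, Pi.star_apply, c, σ,
      Complex.star_def, Complex.conj_ofReal, sub_mul, Real.cos_sub]
    push_cast
    ring
  rw [h]
  exact (condNegSemidef_of_add fun _ => 1 / 2).add
    ((posSemidef_vecMulVec_self_star c).add (posSemidef_vecMulVec_self_star σ)).condNegSemidef_neg

theorem condNegSemidef_abs_sub_rpow {α : ℝ} (hα0 : 0 < α) (hα2 : α ≤ 2) (t : ι → ℝ) :
    (of fun i j => ((|t i - t j| ^ α : ℝ) : ℂ)).CondNegSemidef := by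
  rcases hα2.eq_or_lt with rfl | hα2
  · simpa only [Real.rpow_two, sq_abs] using condNegSemidef_sub_sq t
  obtain ⟨C, hC, hCeq⟩ : ∃ C > 0, ∀ u : ℝ,
      ∫ s in Ioi 0, (1 - Real.cos (u * s)) * s ^ (-1 - α) = |u| ^ α * C :=
    ⟨_, integral_one_sub_cos_mul_rpow_pos hα0 hα2, integral_one_sub_cos_mul_rpow hα0⟩
  have hK : (of fun i j => ∫ s in Ioi 0,
      (((1 - Real.cos ((t i - t j) * s)) * s ^ (-1 - α) : ℝ) : ℂ)).CondNegSemidef := by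
    refine CondNegSemidef.integral
      (fun i j => (integrableOn_one_sub_cos_mul_rpow hα0 hα2 _).ofReal)
      (ae_restrict_of_forall_mem measurableSet_Ioi fun s hs => ?_)
    have h : (of fun i j => (((1 - Real.cos ((t i - t j) * s)) * s ^ (-1 - α) : ℝ) : ℂ)) =
        ((s ^ (-1 - α) : ℝ) : ℂ) • of fun i j => ((1 - Real.cos ((t i - t j) * s) : ℝ) : ℂ) := by
      ext i j
      simp [mul_comm]
    rw [h]
    exact (condNegSemidef_one_sub_cos t s).smul
      (Complex.zero_le_real.mpr (Real.rpow_nonneg (le_of_lt hs) _))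
  have h : (of fun i j => ((|t i - t j| ^ α : ℝ) : ℂ)) = ((C⁻¹ : ℝ) : ℂ) • of fun i j =>
      ∫ s in Ioi 0, (((1 - Real.cos ((t i - t j) * s)) * s ^ (-1 - α) : ℝ) : ℂ) := by
    ext i j
    simp only [of_apply, smul_apply, smul_eq_mul, integral_complex_ofReal, hCeq,
      ← Complex.ofReal_mul]
    field_simp
  rw [h]
  exact hK.smul (Complex.zero_le_real.mpr (inv_pos.mpr hC).le)

end Matrix

theorem sas_characteristic_functional_posdef_general (α : ℝ) (hα0 : 0 < α) (hα2 : α ≤ 2)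
    (d : ℕ) (n : ℕ)
    (φ : Fin n → (Fin d → ℝ) → ℝ)
    (hmeas : ∀ i, Measurable (φ i))
    (hint : ∀ i, Integrable (fun x => |φ i x| ^ α) (volume.restrict (torusCube d)))
    (c : Fin n → ℂ) :
    0 ≤ (∑ i : Fin n, ∑ j : Fin n, c i * (starRingEnd ℂ) (c j) *
        Complex.exp (-((∫ x in torusCube d, |φ i x - φ j x| ^ α : ℝ) : ℂ))).re ∧
    (∑ i : Fin n, ∑ j : Fin n, c i * (starRingEnd ℂ) (c j) *
        Complex.exp (-((∫ x in torusCube d, |φ i x - φ j x| ^ α : ℝ) : ℂ))).im = 0 := by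
  have hN : (of fun i j => ∫ x in torusCube d, ((|φ i x - φ j x| ^ α : ℝ) : ℂ)).CondNegSemidef :=
    CondNegSemidef.integral
      (fun i j => (integrable_abs_sub_rpow hα0 (hmeas i).aestronglyMeasurable
        (hmeas j).aestronglyMeasurable (hint i) (hint j)).ofReal)
      (ae_of_all _ fun x => condNegSemidef_abs_sub_rpow hα0 hα2 fun i => φ i x)
  have h := hN.posSemidef_map_exp_neg.sum_mul_conj_mul_nonneg c
  simp only [map_apply, of_apply, integral_complex_ofReal] at h
  exact (Complex.nonneg_iff.mp h).imp_right Eq.symm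

theorem sas_characteristic_functional_posdef (α : ℝ) (hα0 : 0 < α) (hα2 : α ≤ 2)
    (d : ℕ) (hd : 1 ≤ d) (n : ℕ) (hn : 1 ≤ n)
    (φ : Fin n → (Fin d → ℝ) → ℝ)
    (hmeas : ∀ i, Measurable (φ i))
    (hint : ∀ i, Integrable (fun x => |φ i x| ^ α) (volume.restrict (torusCube d)))
    (c : Fin n → ℂ) :
    0 ≤ (∑ i : Fin n, ∑ j : Fin n, c i * (starRingEnd ℂ) (c j) *
        Complex.exp (-((∫ x in torusCube d, |φ i x - φ j x| ^ α : ℝ) : ℂ))).re ∧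
    (∑ i : Fin n, ∑ j : Fin n, c i * (starRingEnd ℂ) (c j) *
        Complex.exp (-((∫ x in torusCube d, |φ i x - φ j x| ^ α : ℝ) : ℂ))).im = 0 :=
  sas_characteristic_functional_posdef_general α hα0 hα2 d n φ hmeas hint c
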